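/- Let q' = 2^(ℓ+1), and for d ∈ Z_{q'}^m let F_lead(d) ∈ {0,1}^m be the tuple of leading bits and F_drop(d) ∈ Z_{2^ℓ}^m the tuple obtained by dropping the leading bits. If d ∈ S_j(ℓ+1), then F_drop(d) ∈ S_l(ℓ) for every l with 0 ≤ l ≤ max(2j + 1 - |F_lead(d)|, 0), where |·| counts nonzero components. -/

import Mathlib

open Finset

def le2 (a b : ℕ) : Prop := ∀ t, a.testBit t = true → b.testBit t = true

def memS (m r ℓ j : ℕ) (d : Fin m → ℕ) : Prop :=
  ∃ i : Fin m → ℕ, (∀ k, i k < 2 ^ ℓ) ∧ (∀ k, le2 (i k) (d k)) ∧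
    (∑ k, i k) = (2 ^ ℓ - r) + j * 2 ^ ℓ

/-- drop the leading bit (of weight 2^ℓ) from each component. -/
def Fdrop (ℓ : ℕ) {m : ℕ} (d : Fin m → ℕ) : Fin m → ℕ := fun k => d k % 2 ^ ℓ

/-- Hamming weight of the tuple of leading bits. -/
def leadWeight (ℓ : ℕ) {m : ℕ} (d : Fin m → ℕ) : ℕ :=
  (Finset.univ.filter fun k => d k / 2 ^ ℓ = 1).card

lemma le2_le {a b : ℕ} (h : le2 a b) : a ≤ b := Nat.le_of_testBit h

lemma le2_zero (a : ℕ) : le2 0 a := by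
  intro t ht; simp at ht

lemma le2_high {ℓ x y e f : ℕ} (hx : x < 2 ^ ℓ) (hy : y < 2 ^ ℓ)
    (hxy : le2 x y) (hef : le2 e f) : le2 (2 ^ ℓ * e + x) (2 ^ ℓ * f + y) := by
  intro t ht
  rw [Nat.testBit_two_pow_mul_add _ hx] at ht
  rw [Nat.testBit_two_pow_mul_add _ hy]
  by_cases h : t < ℓ
  · simp only [if_pos h] at ht ⊢; exact hxy t ht
  · simp only [if_neg h] at ht ⊢; exact hef _ ht

/-- Key splitting lemma: a tuple of numbers each `< 2^ℓ` can be split (bitwise)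
into two parts, one of which has any prescribed sum `T` that is a multiple of
`2^ℓ` and at most the total sum. -/
lemma split_lemma (ℓ : ℕ) {m : ℕ} : ∀ (a : Fin m → ℕ), (∀ k, a k < 2 ^ ℓ) →
    ∀ T, 2 ^ ℓ ∣ T → T ≤ ∑ k, a k →
    ∃ b c : Fin m → ℕ, (∀ k, le2 (b k) (a k)) ∧ (∀ k, le2 (c k) (a k)) ∧
      (∀ k, b k + c k = a k) ∧ (∑ k, b k) = T := by
  induction ℓ with
  | zero =>
    intro a ha T _ hle
    have ha0 : ∀ k, a k = 0 := fun k => by have := ha k; omega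
    have hs0 : ∑ k, a k = 0 := Finset.sum_eq_zero fun k _ => ha0 k
    refine ⟨0, 0, fun k => le2_zero _, fun k => le2_zero _, fun k => by simp [ha0 k], ?_⟩
    simp
    omega
  | succ ℓ ih =>
    intro a ha T hdvd hle
    have hP : 0 < 2 ^ ℓ := Nat.pow_pos (by norm_num)
    set lo : Fin m → ℕ := fun k => a k % 2 ^ ℓ with hlo
    set hi : Fin m → ℕ := fun k => a k / 2 ^ ℓ with hhi
    have hilem : ∀ k, hi k ≤ 1 := by
      intro k
      have h1 : a k < 2 * 2 ^ ℓ := by have := ha k; rw [pow_succ] at this; omega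
      have : a k / 2 ^ ℓ < 2 := (Nat.div_lt_iff_lt_mul hP).mpr (by omega)
      simpa [hhi] using Nat.lt_succ_iff.mp this
    have hdec : ∀ k, a k = 2 ^ ℓ * hi k + lo k := fun k => (Nat.div_add_mod (a k) (2 ^ ℓ)).symm
    have hlolt : ∀ k, lo k < 2 ^ ℓ := fun k => Nat.mod_lt _ hP
    have hsumhi : ∑ k, hi k = (Finset.univ.filter fun k => hi k = 1).card := by
      rw [Finset.card_filter]
      refine Finset.sum_congr rfl fun k _ => ?_
      have := hilem k
      by_cases h : hi k = 1
      · simp [h]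
      · have h0 : hi k = 0 := by omega
        simp [h, h0]
    set H : Finset (Fin m) := Finset.univ.filter fun k => hi k = 1 with hH
    have hsa : ∑ k, a k = 2 ^ ℓ * H.card + ∑ k, lo k := by
      rw [← hsumhi, Finset.mul_sum, ← Finset.sum_add_distrib]
      exact Finset.sum_congr rfl fun k _ => hdec k
    have hPT : (2 : ℕ) ^ ℓ ∣ T := dvd_trans ⟨2, by rw [pow_succ]⟩ hdvd
    set s : ℕ := min H.card (T / 2 ^ ℓ) with hs
    obtain ⟨C, hCsub, hCcard⟩ :=
      Finset.exists_subset_card_eq (show s ≤ H.card from min_le_left _ _)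
    have hTP : T / 2 ^ ℓ * 2 ^ ℓ = T := Nat.div_mul_cancel hPT
    have hsP : s * 2 ^ ℓ ≤ T := by
      calc s * 2 ^ ℓ ≤ T / 2 ^ ℓ * 2 ^ ℓ :=
            Nat.mul_le_mul_right _ (min_le_right _ _)
        _ = T := hTP
    have hT'dvd : (2 : ℕ) ^ ℓ ∣ T - s * 2 ^ ℓ := Nat.dvd_sub hPT (dvd_mul_left _ _)
    have hT'le : T - s * 2 ^ ℓ ≤ ∑ k, lo k := by
      by_cases hcase : H.card ≤ T / 2 ^ ℓ
      · have hseq : s = H.card := min_eq_left hcase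
        have h1 : T ≤ 2 ^ ℓ * H.card + ∑ k, lo k := by rw [← hsa]; exact hle
        have hcm : H.card * 2 ^ ℓ = 2 ^ ℓ * H.card := Nat.mul_comm _ _
        rw [hseq]
        omega
      · have hseq : s = T / 2 ^ ℓ := min_eq_right (by omega)
        rw [hseq, hTP]
        omega
    clear_value s
    obtain ⟨b', c', hb'le, hc'le, hbc', hsb'⟩ :=
      ih lo hlolt (T - s * 2 ^ ℓ) hT'dvd hT'le
    have hb'lt : ∀ k, b' k < 2 ^ ℓ := fun k => lt_of_le_of_lt (le2_le (hb'le k)) (hlolt k)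
    have hc'lt : ∀ k, c' k < 2 ^ ℓ := fun k => lt_of_le_of_lt (le2_le (hc'le k)) (hlolt k)
    refine ⟨fun k => 2 ^ ℓ * (if k ∈ C then 1 else 0) + b' k,
            fun k => 2 ^ ℓ * (if hi k = 1 ∧ k ∉ C then 1 else 0) + c' k,
            ?_, ?_, ?_, ?_⟩
    · intro k
      rw [hdec k]
      refine le2_high (hb'lt k) (hlolt k) (hb'le k) ?_
      intro t ht
      by_cases hk : k ∈ C
      · have h1 : hi k = 1 := (Finset.mem_filter.mp (hCsub hk)).2
        simp only [if_pos hk] at ht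
        rw [h1]; exact ht
      · simp [if_neg hk] at ht
    · intro k
      rw [hdec k]
      refine le2_high (hc'lt k) (hlolt k) (hc'le k) ?_
      intro t ht
      by_cases hk : hi k = 1 ∧ k ∉ C
      · simp only [if_pos hk] at ht
        rw [hk.1]; exact ht
      · simp [if_neg hk] at ht
    · intro k
      have hind : (if k ∈ C then 1 else 0) + (if hi k = 1 ∧ k ∉ C then 1 else 0) = hi k := by
        by_cases hk2 : k ∈ C
        · have h1 : hi k = 1 := (Finset.mem_filter.mp (hCsub hk2)).2
          simp [hk2, h1]
        · by_cases hk1 : hi k = 1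
          · simp [hk1, hk2]
          · have h0 : hi k = 0 := by have := hilem k; omega
            simp [hk1, hk2, h0]
      calc 2 ^ ℓ * (if k ∈ C then 1 else 0) + b' k +
            (2 ^ ℓ * (if hi k = 1 ∧ k ∉ C then 1 else 0) + c' k)
          = 2 ^ ℓ * ((if k ∈ C then 1 else 0) + (if hi k = 1 ∧ k ∉ C then 1 else 0))
              + (b' k + c' k) := by ring
        _ = 2 ^ ℓ * hi k + lo k := by rw [hind, hbc' k]
        _ = a k := (hdec k).symm
    · have h1 : ∑ k, (2 ^ ℓ * (if k ∈ C then 1 else 0) + b' k)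
          = 2 ^ ℓ * (∑ k, (if k ∈ C then (1:ℕ) else 0)) + ∑ k, b' k := by
        rw [Finset.mul_sum, ← Finset.sum_add_distrib]
      have h2 : ∑ k, (if k ∈ C then (1:ℕ) else 0) = C.card := by
        simp [Finset.sum_ite_mem, Finset.univ_inter]
      rw [h1, h2, hCcard, hsb']
      have hcm : s * 2 ^ ℓ = 2 ^ ℓ * s := Nat.mul_comm _ _
      omega

theorem stmt9 (ℓ m r : ℕ) (hm : 1 ≤ m) (hr : 1 ≤ r) (hrm : r ≤ m) (hrq : r ≤ 2 ^ ℓ)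
    (j : ℕ) (d : Fin m → ℕ) (hd : ∀ k, d k < 2 ^ (ℓ + 1))
    (hdS : memS m r (ℓ + 1) j d) :
    ∀ l ≤ 2 * j + 1 - leadWeight ℓ d, memS m r ℓ l (Fdrop ℓ d) := by
  intro l hl
  obtain ⟨i, hilt, hile, hisum⟩ := hdS
  have hP : 0 < 2 ^ ℓ := Nat.pow_pos (by norm_num)
  have hP2 : (2 : ℕ) ^ (ℓ + 1) = 2 * 2 ^ ℓ := by rw [pow_succ]; ring
  set a : Fin m → ℕ := fun k => i k % 2 ^ ℓ with ha
  set hi : Fin m → ℕ := fun k => i k / 2 ^ ℓ with hhi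
  have halt : ∀ k, a k < 2 ^ ℓ := fun k => Nat.mod_lt _ hP
  have hilem : ∀ k, hi k ≤ 1 := by
    intro k
    have h1 : i k < 2 * 2 ^ ℓ := by have := hilt k; omega
    have : i k / 2 ^ ℓ < 2 := (Nat.div_lt_iff_lt_mul hP).mpr (by omega)
    simpa [hhi] using Nat.lt_succ_iff.mp this
  have hsumhi : ∑ k, hi k = (Finset.univ.filter fun k => hi k = 1).card := by
    rw [Finset.card_filter]
    refine Finset.sum_congr rfl fun k _ => ?_
    have := hilem k
    by_cases h : hi k = 1
    · simp [h]
    · have h0 : hi k = 0 := by omega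
      simp [h, h0]
  -- the number of high bits of i, bounded by the lead weight of d
  have hBw : (Finset.univ.filter fun k => hi k = 1).card ≤ leadWeight ℓ d := by
    apply Finset.card_le_card
    intro k hk
    rw [Finset.mem_filter] at hk ⊢
    refine ⟨Finset.mem_univ _, ?_⟩
    have h1 : (i k).testBit ℓ = true := by
      rw [Nat.testBit_eq_decide_div_mod_eq]
      have h2 : i k / 2 ^ ℓ = 1 := hk.2
      simp [h2]
    have h2 := hile k ℓ h1
    rw [Nat.testBit_eq_decide_div_mod_eq] at h2
    have h3 : d k / 2 ^ ℓ % 2 = 1 := by simpa using h2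
    have h4 : d k / 2 ^ ℓ < 2 := (Nat.div_lt_iff_lt_mul hP).mpr (by have := hd k; omega)
    generalize d k / 2 ^ ℓ = x at h3 h4 ⊢
    omega
  set B : ℕ := (Finset.univ.filter fun k => hi k = 1).card with hB
  clear_value B
  have hdecomp : ∑ k, i k = 2 ^ ℓ * B + ∑ k, a k := by
    rw [← hsumhi, Finset.mul_sum, ← Finset.sum_add_distrib]
    exact Finset.sum_congr rfl fun k _ => (Nat.div_add_mod (i k) (2 ^ ℓ)).symm
  have hj2 : j * 2 ^ (ℓ + 1) = 2 * (j * 2 ^ ℓ) := by rw [hP2]; ring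
  have hB21 : B ≤ 2 * j + 1 := by
    have h1 : 2 ^ ℓ * B ≤ ∑ k, i k := by rw [hdecomp]; omega
    have h2 : ∑ k, i k < 2 ^ ℓ * (2 * j + 2) := by
      rw [hisum, hj2]
      have h3 : 2 ^ ℓ * (2 * j + 2) = 2 * (j * 2 ^ ℓ) + 2 * 2 ^ ℓ := by ring
      omega
    have := Nat.lt_of_mul_lt_mul_left (lt_of_le_of_lt h1 h2)
    omega
  set L : ℕ := 2 * j + 1 - B with hL
  clear_value L
  have hlL : l ≤ L := by omega
  have hsa : ∑ k, a k = (2 ^ ℓ - r) + L * 2 ^ ℓ := by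
    have hLB : L + B = 2 * j + 1 := by omega
    have e1 : (2 * j + 1) * 2 ^ ℓ = 2 * (j * 2 ^ ℓ) + 2 ^ ℓ := by ring
    have e2 : (2 * j + 1) * 2 ^ ℓ = L * 2 ^ ℓ + B * 2 ^ ℓ := by
      rw [← hLB]; ring
    have e3 : 2 ^ ℓ * B = B * 2 ^ ℓ := Nat.mul_comm _ _
    omega
  have hTle : (L - l) * 2 ^ ℓ ≤ ∑ k, a k := by
    have h1 : (L - l) * 2 ^ ℓ ≤ L * 2 ^ ℓ := Nat.mul_le_mul_right _ (by omega)
    omega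
  obtain ⟨b, c, _, hcle, hbc, hsb⟩ :=
    split_lemma ℓ a halt ((L - l) * 2 ^ ℓ) (dvd_mul_left _ _) hTle
  refine ⟨c, ?_, ?_, ?_⟩
  · intro k
    have h1 := hbc k
    have h2 := halt k
    omega
  · intro k t ht
    have h1 := hcle k t ht
    rw [ha] at h1
    simp only [Nat.testBit_mod_two_pow] at h1
    obtain ⟨htl, hti⟩ := Bool.and_eq_true_iff.mp h1
    have h2 := hile k t (by simpa using hti)
    show ((d k % 2 ^ ℓ).testBit t) = true
    simp only [Nat.testBit_mod_two_pow]
    rw [h2, htl]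
    rfl
  · have hsum_bc : ∑ k, b k + ∑ k, c k = ∑ k, a k := by
      rw [← Finset.sum_add_distrib]
      exact Finset.sum_congr rfl fun k _ => hbc k
    have e4 : (L - l) * 2 ^ ℓ + l * 2 ^ ℓ = L * 2 ^ ℓ := by
      rw [← add_mul, Nat.sub_add_cancel hlL]
    omega
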